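/- arXiv:2503.15694 — 6 statements merged into one kernel-verified Lean document; each statement's English description precedes it below -/
import Mathlib

section
/- Let α, β, γ, δ be reals with γ, δ > 0 and (α−β)² < (γ+δ)², and set s = (α−β)/(γ+δ), c = √(1−s²). The symmetric matrix Σ̃ = [[γc, α − δs],[α − δs, δc]] satisfies (Σ̃ − Ãᵀ)(Σ̃ − Ã) = diag(γ², δ²) where Ã = [[0,α],[β,0]], provided additionally γ² = κ η_x + β² and δ² = κ η_p + α² for some κ > 0 with η_x, η_p ∈ (0,1]. -/
/-! Since `(γ + δ) s = α - β`, the matrix `Σ̃ - Ã` equals `R diag(γ, δ)` with `R` the rotation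
`[[c, -s], [s, c]]`, and `Σ̃ - Ãᵀ` is its transpose because `Σ̃` is symmetric. Hence the product is
`diag(γ, δ) Rᵀ R diag(γ, δ) = diag(γ², δ²)`. -/

open Matrix

section

variable {R : Type*} [CommRing R]

theorem rotation_transpose_mul_self {c s : R} (hcs : c ^ 2 + s ^ 2 = 1) :
    !![c, -s; s, c]ᵀ * !![c, -s; s, c] = 1 := by
  ext i j
  fin_cases i <;> fin_cases j <;> simp [mul_apply, Fin.sum_univ_two] <;> grind

theorem sub_eq_rotation_mul_diagonal {α β γ δ c s : R} (hs : (γ + δ) * s = α - β) :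
    !![γ * c, α - δ * s; α - δ * s, δ * c] - !![0, α; β, 0] =
      !![c, -s; s, c] * diagonal ![γ, δ] := by
  ext i j
  fin_cases i <;> fin_cases j <;> simp <;> grind

theorem sub_transpose_mul_sub_eq_diagonal {α β γ δ c s : R} (hcs : c ^ 2 + s ^ 2 = 1)
    (hs : (γ + δ) * s = α - β) :
    let St : Matrix (Fin 2) (Fin 2) R := !![γ * c, α - δ * s; α - δ * s, δ * c]
    let At : Matrix (Fin 2) (Fin 2) R := !![0, α; β, 0]
    (St - Atᵀ) * (St - At) = !![γ ^ 2, 0; 0, δ ^ 2] := by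
  intro St At
  have hSt : St - Atᵀ = (St - At)ᵀ := by
    have hsymm : Stᵀ = St := by
      ext i j
      fin_cases i <;> fin_cases j <;> rfl
    rw [transpose_sub, hsymm]
  calc (St - Atᵀ) * (St - At)
      = (diagonal ![γ, δ])ᵀ * (!![c, -s; s, c]ᵀ * !![c, -s; s, c]) * diagonal ![γ, δ] := by
        rw [hSt, sub_eq_rotation_mul_diagonal hs, transpose_mul,
          Matrix.mul_assoc, Matrix.mul_assoc, Matrix.mul_assoc]
    _ = !![γ ^ 2, 0; 0, δ ^ 2] := by
        rw [rotation_transpose_mul_self hcs, Matrix.mul_one, diagonal_transpose,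
          diagonal_mul_diagonal, diagonal_fin_two]
        simp only [cons_val_zero, cons_val_one, sq]

end

theorem stmt_4_general (α β γ δ : ℝ) (h : (α - β) ^ 2 < (γ + δ) ^ 2) :
    let s := (α - β) / (γ + δ)
    let c := Real.sqrt (1 - s ^ 2)
    let St : Matrix (Fin 2) (Fin 2) ℝ := !![γ * c, α - δ * s; α - δ * s, δ * c]
    let At : Matrix (Fin 2) (Fin 2) ℝ := !![0, α; β, 0]
    (St - Atᵀ) * (St - At) = !![γ ^ 2, 0; 0, δ ^ 2] := by
  intro s c
  have hpos : 0 < (γ + δ) ^ 2 := (sq_nonneg _).trans_lt h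
  have hs2 : s ^ 2 < 1 := by
    rw [div_pow, div_lt_one hpos]
    exact h
  have hcs : c ^ 2 + s ^ 2 = 1 := by
    rw [Real.sq_sqrt (by linarith)]
    ring
  have hγδ : γ + δ ≠ 0 := (pow_ne_zero_iff two_ne_zero).mp hpos.ne'
  exact sub_transpose_mul_sub_eq_diagonal hcs (mul_div_cancel₀ _ hγδ)

theorem stmt_4 (α β γ δ κ ηx ηp : ℝ) (hγ : 0 < γ) (hδ : 0 < δ)
    (h : (α - β) ^ 2 < (γ + δ) ^ 2) (hκ : 0 < κ)
    (hηx : 0 < ηx) (hηx1 : ηx ≤ 1) (hηp : 0 < ηp) (hηp1 : ηp ≤ 1)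
    (hγ2 : γ ^ 2 = κ * ηx + β ^ 2) (hδ2 : δ ^ 2 = κ * ηp + α ^ 2) :
    let s := (α - β) / (γ + δ)
    let c := Real.sqrt (1 - s ^ 2)
    let St : Matrix (Fin 2) (Fin 2) ℝ := !![γ * c, α - δ * s; α - δ * s, δ * c]
    let At : Matrix (Fin 2) (Fin 2) ℝ := !![0, α; β, 0]
    (St - Atᵀ) * (St - At) = !![γ ^ 2, 0; 0, δ ^ 2] :=
  stmt_4_general α β γ δ h
end

section
/- Let A, B, Q be real n×n matrices with Q symmetric, Σ_∞ a symmetric solution of the algebraic Riccati equation ΣA + AᵀΣ − ΣBBᵀΣ + Q = 0, Γ = A − BBᵀΣ_∞, and Σ_0 symmetric with Σ_0 − Σ_∞ positive definite. Then Σ_t := Σ_∞ + e^{Γᵀt}((Σ_0 − Σ_∞)⁻¹ + ∫₀ᵗ e^{Γτ}BBᵀe^{Γᵀτ}dτ)⁻¹ e^{Γt} is well-defined for all t ≥ 0 and solves the Riccati differential equation Σ̇ = ΣA + AᵀΣ − ΣBBᵀΣ + Q with Σ_{t=0} = Σ_0. -/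
/-!
Write `Σ_t = Σ_∞ + P_t`. Subtracting the algebraic Riccati equation turns the Riccati equation
for `Σ` into `Ṗ = ΓᵀP + PΓ - P B Bᵀ P`, and `P_t = e^{Γᵀt} K_t⁻¹ e^{Γt}` solves it: by the product
rule and `(K⁻¹)' = -K⁻¹ K' K⁻¹`, the derivative `K'_t = e^{Γt} B Bᵀ e^{Γᵀt}` makes the middle term
exactly `-P B Bᵀ P`. The matrix `K_t` is invertible for `t ≥ 0`, being positive definite plus
an integral of positive semidefinite matrices `e^{Γτ} B Bᵀ (e^{Γτ})ᵀ`.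
-/

open Matrix NormedSpace

theorem HasDerivAt.ringInverse {𝕜 R : Type*} [NontriviallyNormedField 𝕜] [NormedRing R]
    [HasSummableGeomSeries R] [NormedAlgebra 𝕜 R] {f : 𝕜 → R} {f' : R} {t : 𝕜}
    (hf : HasDerivAt f f' t) (ht : IsUnit (f t)) :
    HasDerivAt (fun s => Ring.inverse (f s))
      (-(Ring.inverse (f t) * f' * Ring.inverse (f t))) t := by
  obtain ⟨u, hu⟩ := ht
  have := (hasFDerivAt_ringInverse (𝕜 := 𝕜) u).comp_hasDerivAt_of_eq t hf hu
  simpa [Function.comp_def, ← hu, Ring.inverse_unit] using this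

theorem riccati_add_eq_of_algebraic {α : Type*} [Ring α] {A A' R Q X : α}
    (hX : X * A + A' * X - X * R * X + Q = 0) (P : α) :
    (X + P) * A + A' * (X + P) - (X + P) * R * (X + P) + Q =
      (A' - X * R) * P + P * (A - R * X) - P * R * P :=
  calc _ = (X * A + A' * X - X * R * X + Q) +
        ((A' - X * R) * P + P * (A - R * X) - P * R * P) := by noncomm_ring
    _ = _ := by rw [hX, zero_add]

theorem hasDerivAt_exp_mul_inverse_mul_exp {𝕂 𝔸 : Type*} [RCLike 𝕂] [NormedRing 𝔸]
    [NormedAlgebra 𝕂 𝔸] [CompleteSpace 𝔸] (Γ Λ R : 𝔸) {K : 𝕂 → 𝔸} {t : 𝕂}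
    (hK : HasDerivAt K (exp (t • Γ) * R * exp (t • Λ)) t) (ht : IsUnit (K t)) {P : 𝔸}
    (hP : exp (t • Λ) * Ring.inverse (K t) * exp (t • Γ) = P) :
    HasDerivAt (fun s => exp (s • Λ) * Ring.inverse (K s) * exp (s • Γ))
      (Λ * P + P * Γ - P * R * P) t := by
  subst hP
  refine (((hasDerivAt_exp_smul_const' Λ t).mul (hK.ringInverse ht)).mul
    (hasDerivAt_exp_smul_const Γ t)).congr_deriv ?_
  simp only [Pi.mul_apply]
  noncomm_ring

namespace Matrix

variable {m n : Type*} [Fintype m] [Fintype n]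

theorem PosSemidef.exp_smul_mul_mul_exp_smul_transpose [DecidableEq m] {R : Matrix m m ℝ}
    (hR : R.PosSemidef) (Γ : Matrix m m ℝ) (τ : ℝ) :
    (exp (τ • Γ) * R * exp (τ • Γᵀ)).PosSemidef := by
  have hE : exp (τ • Γᵀ) = (exp (τ • Γ))ᴴ := by
    rw [conjTranspose_eq_transpose_of_trivial, ← exp_transpose, transpose_smul]
  exact hE ▸ hR.mul_mul_conjTranspose_same _

section Normed

-- Derivatives and Bochner integrals of matrices need a norm. Lemmas used outside this section
-- are stated entrywise or topologically, so they do not depend on the choice.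
attribute [local instance] Matrix.linftyOpNormedAddCommGroup Matrix.linftyOpNormedSpace
  Matrix.linftyOpNormedRing Matrix.linftyOpNormedAlgebra

theorem _root_.HasDerivAt.matrix_apply {f : ℝ → Matrix m n ℝ} {f' : Matrix m n ℝ} {t : ℝ}
    (hf : HasDerivAt f f' t) (i : m) (j : n) :
    HasDerivAt (fun s => f s i j) (f' i j) t :=
  (entryLinearMap ℝ ℝ i j).toContinuousLinearMap.hasFDerivAt.comp_hasDerivAt t hf

theorem intervalIntegral_apply {g : ℝ → Matrix m n ℝ} (hg : Continuous g) (a b : ℝ) (i : m)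
    (j : n) : (∫ τ in a..b, g τ) i j = ∫ τ in a..b, g τ i j :=
  ((entryLinearMap ℝ ℝ i j).toContinuousLinearMap.intervalIntegral_comp_comm
    (hg.intervalIntegrable a b)).symm

theorem PosSemidef.intervalIntegral [DecidableEq m] {g : ℝ → Matrix m m ℝ} {a b : ℝ}
    (hab : a ≤ b) (hg : Continuous g) (hpsd : ∀ τ ∈ Set.Icc a b, (g τ).PosSemidef) :
    (∫ τ in a..b, g τ).PosSemidef := by
  refine posSemidef_iff_dotProduct_mulVec.mpr ⟨?_, fun x => ?_⟩
  · let tr : Matrix m m ℝ →L[ℝ] Matrix m m ℝ :=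
      (transposeLinearEquiv m m ℝ ℝ).toLinearMap.toContinuousLinearMap
    have hsymm : Set.EqOn (fun τ => (g τ)ᵀ) g (Set.uIcc a b) := fun τ hτ => by
      simpa [conjTranspose_eq_transpose_of_trivial] using
        (hpsd τ (Set.uIcc_of_le hab ▸ hτ)).isHermitian.eq
    calc (∫ τ in a..b, g τ)ᴴ = tr (∫ τ in a..b, g τ) := conjTranspose_eq_transpose_of_trivial _
      _ = ∫ τ in a..b, (g τ)ᵀ :=
          (tr.intervalIntegral_comp_comm (hg.intervalIntegrable a b)).symm
      _ = ∫ τ in a..b, g τ := intervalIntegral.integral_congr hsymm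
  · let q : Matrix m m ℝ →L[ℝ] ℝ := (LinearMap.applyₗ x ∘ₗ LinearMap.applyₗ (star x) ∘ₗ
      (toLinearMap₂' ℝ).toLinearMap).toContinuousLinearMap
    have hq : ∀ M, q M = star x ⬝ᵥ M *ᵥ x := fun M => toLinearMap₂'_apply' M _ _
    calc 0 ≤ ∫ τ in a..b, q (g τ) := intervalIntegral.integral_nonneg hab fun τ hτ => by
          simpa only [hq] using (hpsd τ hτ).dotProduct_mulVec_nonneg x
      _ = star x ⬝ᵥ (∫ τ in a..b, g τ) *ᵥ x :=
          (q.intervalIntegral_comp_comm (hg.intervalIntegrable a b)).trans (hq _)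

theorem of_intervalIntegral_apply {g : ℝ → Matrix m n ℝ} (hg : Continuous g) (a b : ℝ) :
    (of fun i j => ∫ τ in a..b, g τ i j) = ∫ τ in a..b, g τ :=
  ext fun i j => (intervalIntegral_apply hg a b i j).symm

theorem PosSemidef.of_intervalIntegral_apply [DecidableEq m] {g : ℝ → Matrix m m ℝ} {a b : ℝ}
    (hab : a ≤ b) (hg : Continuous g) (hpsd : ∀ τ ∈ Set.Icc a b, (g τ).PosSemidef) :
    (of fun i j => ∫ τ in a..b, g τ i j).PosSemidef :=
  Matrix.of_intervalIntegral_apply hg a b ▸ PosSemidef.intervalIntegral hab hg hpsd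

theorem continuous_exp_smul_mul_mul_exp_smul [DecidableEq m] (Γ R Λ : Matrix m m ℝ) :
    Continuous fun τ : ℝ => exp (τ • Γ) * R * exp (τ • Λ) := by
  fun_prop

theorem hasDerivAt_exp_mul_inv_mul_exp_apply [DecidableEq m] (C Γ Λ R : Matrix m m ℝ)
    {K : ℝ → Matrix m m ℝ}
    (hK : ∀ s, K s = C + of fun i j => ∫ τ in (0:ℝ)..s, (exp (τ • Γ) * R * exp (τ • Λ)) i j)
    {t : ℝ} (ht : IsUnit (K t)) {P : Matrix m m ℝ} (hP : exp (t • Λ) * (K t)⁻¹ * exp (t • Γ) = P)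
    (i j : m) :
    HasDerivAt (fun s => (exp (s • Λ) * (K s)⁻¹ * exp (s • Γ)) i j)
      ((Λ * P + P * Γ - P * R * P) i j) t := by
  have hg := continuous_exp_smul_mul_mul_exp_smul Γ R Λ
  have hKderiv : HasDerivAt K (exp (t • Γ) * R * exp (t • Λ)) t := by
    simp only [funext hK, of_intervalIntegral_apply hg]
    exact (hg.integral_hasStrictDerivAt 0 t).hasDerivAt.const_add C
  simp only [nonsing_inv_eq_ringInverse] at hP ⊢
  exact (hasDerivAt_exp_mul_inverse_mul_exp Γ Λ R hKderiv ht hP).matrix_apply i j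

end Normed

end Matrix

theorem stmt_8_general {n : ℕ} (A B Q Sinf S0 : Matrix (Fin n) (Fin n) ℝ)
    (hSinf : Sinfᵀ = Sinf)
    (hARE : Sinf * A + Aᵀ * Sinf - Sinf * B * Bᵀ * Sinf + Q = 0)
    (hpos : (S0 - Sinf).PosDef) :
    let Γ : Matrix (Fin n) (Fin n) ℝ := A - B * Bᵀ * Sinf
    let K : ℝ → Matrix (Fin n) (Fin n) ℝ := fun t =>
      (S0 - Sinf)⁻¹ + Matrix.of fun i j =>
        ∫ τ in (0:ℝ)..t,
          (NormedSpace.exp (τ • Γ) * B * Bᵀ * NormedSpace.exp (τ • Γᵀ)) i j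
    let S : ℝ → Matrix (Fin n) (Fin n) ℝ := fun t =>
      Sinf + NormedSpace.exp (t • Γᵀ) * (K t)⁻¹ * NormedSpace.exp (t • Γ)
    S 0 = S0 ∧
    ∀ t : ℝ, 0 ≤ t → IsUnit (K t) ∧
      ∀ i j, HasDerivAt (fun s => S s i j)
        ((S t * A + Aᵀ * S t - S t * B * Bᵀ * S t + Q) i j) t := by
  intro Γ K S
  refine ⟨?_, fun t ht => ?_⟩
  · have hK0 : K 0 = (S0 - Sinf)⁻¹ := by
      simp only [K, intervalIntegral.integral_same]
      exact add_zero _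
    simp [S, hK0, nonsing_inv_nonsing_inv _ ((isUnit_iff_isUnit_det _).mp hpos.isUnit)]
  · have hK : ∀ s, K s = (S0 - Sinf)⁻¹ +
        of fun i j => ∫ τ in (0:ℝ)..s, (exp (τ • Γ) * (B * Bᵀ) * exp (τ • Γᵀ)) i j :=
      fun s => by simp only [K, Matrix.mul_assoc]
    have hBBT : (B * Bᵀ).PosSemidef := by
      simpa [conjTranspose_eq_transpose_of_trivial] using posSemidef_self_mul_conjTranspose B
    have hKt : (K t).PosDef := hK t ▸ hpos.inv.add_posSemidef
      (.of_intervalIntegral_apply ht (continuous_exp_smul_mul_mul_exp_smul _ _ _)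
        fun τ _ => hBBT.exp_smul_mul_mul_exp_smul_transpose Γ τ)
    refine ⟨hKt.isUnit, fun i j => ?_⟩
    have hΓT : Γᵀ = Aᵀ - Sinf * (B * Bᵀ) := by
      rw [transpose_sub, transpose_mul, transpose_mul, transpose_transpose, hSinf]
    have hderiv := hasDerivAt_exp_mul_inv_mul_exp_apply _ Γ Γᵀ (B * Bᵀ) hK hKt.isUnit rfl i j
    set P := exp (t • Γᵀ) * (K t)⁻¹ * exp (t • Γ)
    have hriccati : S t * A + Aᵀ * S t - S t * B * Bᵀ * S t + Q =
        Γᵀ * P + P * Γ - P * (B * Bᵀ) * P := by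
      rw [Matrix.mul_assoc (S t) B, hΓT]
      exact riccati_add_eq_of_algebraic (by simpa only [Matrix.mul_assoc] using hARE) P
    exact (hderiv.const_add (Sinf i j)).congr_deriv (congrArg (· i j) hriccati).symm

theorem stmt_8 {n : ℕ} (A B Q Sinf S0 : Matrix (Fin n) (Fin n) ℝ)
    (hQ : Qᵀ = Q) (hSinf : Sinfᵀ = Sinf) (hS0 : S0ᵀ = S0)
    (hARE : Sinf * A + Aᵀ * Sinf - Sinf * B * Bᵀ * Sinf + Q = 0)
    (hpos : (S0 - Sinf).PosDef) :
    let Γ : Matrix (Fin n) (Fin n) ℝ := A - B * Bᵀ * Sinf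
    let K : ℝ → Matrix (Fin n) (Fin n) ℝ := fun t =>
      (S0 - Sinf)⁻¹ + Matrix.of fun i j =>
        ∫ τ in (0:ℝ)..t,
          (NormedSpace.exp (τ • Γ) * B * Bᵀ * NormedSpace.exp (τ • Γᵀ)) i j
    let S : ℝ → Matrix (Fin n) (Fin n) ℝ := fun t =>
      Sinf + NormedSpace.exp (t • Γᵀ) * (K t)⁻¹ * NormedSpace.exp (t • Γ)
    S 0 = S0 ∧
    ∀ t : ℝ, 0 ≤ t → IsUnit (K t) ∧
      ∀ i j, HasDerivAt (fun s => S s i j)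
        ((S t * A + Aᵀ * S t - S t * B * Bᵀ * S t + Q) i j) t :=
  stmt_8_general A B Q Sinf S0 hSinf hARE hpos
end

section
/- Let Σ_t be a differentiable family of 2×2 symmetric matrices satisfying Σ̇ = ΣA + AᵀΣ − ΣBBᵀΣ + Q, where A = [[0,−mω²],[1/m,0]], B = diag(√(η_x k_x), √(η_p k_p)), Q = (ℏ²/4)diag(k_p, k_x). Then d_t := det Σ_t satisfies ḋ_t = tr(BΣ_tB)·((ℏ²/4)·tr(χBΣ_tB)/tr(BΣ_tB) − d_t), where χ = diag(1/η_x, 1/η_p), provided tr(BΣ_tB) ≠ 0. -/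
/-!
Jacobi's formula gives `ḋ = tr (adj Σ · Σ̇)`. Since `adj Σ · Σ = Σ · adj Σ = det Σ`, the drift
`ΣA + AᵀΣ` contributes `2 det Σ · tr A = 0`, the quadratic term `ΣBBᵀΣ` contributes
`det Σ · tr (BΣB)`, and the noise term `tr (adj Σ · Q) = (ℏ²/4)(k_p Σ₂₂ + k_x Σ₁₁)` is exactly
`(ℏ²/4) tr (χBΣB)`, because `χ` cancels the efficiencies in `B² = diag (η_x k_x, η_p k_p)`.
-/

open Matrix

theorem Matrix.hasDerivAt_det_fin_two {𝕜 : Type*} [NontriviallyNormedField 𝕜]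
    {S : 𝕜 → Matrix (Fin 2) (Fin 2) 𝕜} {D : Matrix (Fin 2) (Fin 2) 𝕜} {t : 𝕜}
    (h : ∀ i j, HasDerivAt (fun s => S s i j) (D i j) t) :
    HasDerivAt (fun s => (S s).det) (adjugate (S t) * D).trace t := by
  simp_rw [det_fin_two]
  refine (((h 0 0).mul (h 1 1)).sub ((h 0 1).mul (h 1 0))).congr_deriv ?_
  simp only [adjugate_fin_two, trace_fin_two, mul_apply, Fin.sum_univ_two, of_apply, cons_val',
    cons_val_zero, cons_val_one, empty_val', cons_val_fin_one]
  ring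

theorem Matrix.trace_adjugate_mul_riccati {n R : Type*} [Fintype n] [DecidableEq n] [CommRing R]
    (S A M Q : Matrix n n R) :
    (adjugate S * (S * A + Aᵀ * S - S * M * S + Q)).trace =
      S.det * (2 * A.trace - (M * S).trace) + (adjugate S * Q).trace := by
  have hleft : ∀ X : Matrix n n R, (adjugate S * (S * X)).trace = S.det * X.trace := by
    intro X
    rw [← Matrix.mul_assoc, adjugate_mul, smul_mul_assoc, Matrix.one_mul, trace_smul, smul_eq_mul]
  have hright : (adjugate S * (Aᵀ * S)).trace = S.det * A.trace := by
    rw [trace_mul_comm, Matrix.mul_assoc, mul_adjugate, Matrix.mul_smul, Matrix.mul_one,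
      trace_smul, trace_transpose, smul_eq_mul]
  rw [Matrix.mul_add, Matrix.mul_sub, Matrix.mul_add, trace_add, trace_sub, trace_add, hleft,
    hright, Matrix.mul_assoc S M S, hleft]
  ring

theorem Matrix.trace_diagonal_mul_diagonal_conj_fin_two {R : Type*} [CommRing R]
    (c₀ c₁ b₀ b₁ : R) (S : Matrix (Fin 2) (Fin 2) R) :
    (!![c₀, 0; 0, c₁] * (!![b₀, 0; 0, b₁] * S * !![b₀, 0; 0, b₁])).trace =
      c₀ * b₀ ^ 2 * S 0 0 + c₁ * b₁ ^ 2 * S 1 1 := by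
  simp only [trace_fin_two, mul_apply, Fin.sum_univ_two, of_apply, cons_val', cons_val_zero,
    cons_val_one, empty_val', cons_val_fin_one]
  ring

theorem Matrix.trace_adjugate_mul_diagonal_fin_two {R : Type*} [CommRing R]
    (a b : R) (S : Matrix (Fin 2) (Fin 2) R) :
    (adjugate S * !![a, 0; 0, b]).trace = a * S 1 1 + b * S 0 0 := by
  simp only [adjugate_fin_two, trace_fin_two, mul_apply, Fin.sum_univ_two, of_apply, cons_val',
    cons_val_zero, cons_val_one, empty_val', cons_val_fin_one]
  ring

theorem stmt_11_general (m ω ℏ kx kp ηx ηp : ℝ)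
    (hkx : 0 < kx) (hkp : 0 < kp)
    (hηx : 0 < ηx) (hηp : 0 < ηp)
    (S D : ℝ → Matrix (Fin 2) (Fin 2) ℝ)
    (hderiv : ∀ t i j, HasDerivAt (fun s => S s i j) (D t i j) t)
    (hode : ∀ t, D t =
      S t * !![0, -m * ω ^ 2; 1 / m, 0] + (!![0, -m * ω ^ 2; 1 / m, 0])ᵀ * S t
        - S t * !![Real.sqrt (ηx * kx), 0; 0, Real.sqrt (ηp * kp)] *
            (!![Real.sqrt (ηx * kx), 0; 0, Real.sqrt (ηp * kp)])ᵀ * S t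
        + (ℏ ^ 2 / 4) • !![kp, 0; 0, kx]) :
    ∀ t : ℝ,
      let B : Matrix (Fin 2) (Fin 2) ℝ := !![Real.sqrt (ηx * kx), 0; 0, Real.sqrt (ηp * kp)]
      let χ : Matrix (Fin 2) (Fin 2) ℝ := !![1 / ηx, 0; 0, 1 / ηp]
      (B * S t * B).trace ≠ 0 →
      HasDerivAt (fun s => (S s).det)
        ((B * S t * B).trace *
          (ℏ ^ 2 / 4 * ((χ * (B * S t * B)).trace / (B * S t * B).trace) - (S t).det)) t := by
  intro t B χ hne
  have hD : D t = S t * !![0, -m * ω ^ 2; 1 / m, 0] + (!![0, -m * ω ^ 2; 1 / m, 0])ᵀ * S t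
      - S t * (B * Bᵀ) * S t + (ℏ ^ 2 / 4) • !![kp, 0; 0, kx] := by
    rw [hode t, Matrix.mul_assoc (S t)]
  have htrA : (!![0, -m * ω ^ 2; 1 / m, 0] : Matrix (Fin 2) (Fin 2) ℝ).trace = 0 := by
    simp [trace_fin_two]
  have hB : Bᵀ = B := by ext i j; fin_cases i <;> fin_cases j <;> rfl
  have hnoise : (χ * (B * S t * B)).trace = (adjugate (S t) * !![kp, 0; 0, kx]).trace := by
    rw [trace_diagonal_mul_diagonal_conj_fin_two, trace_adjugate_mul_diagonal_fin_two,
      Real.sq_sqrt (by positivity), Real.sq_sqrt (by positivity)]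
    field_simp
    ring
  refine (hasDerivAt_det_fin_two (hderiv t)).congr_deriv ?_
  rw [hD, trace_adjugate_mul_riccati, htrA, mul_smul_comm, trace_smul, ← hnoise,
    ← trace_mul_cycle, hB]
  field_simp
  ring

theorem stmt_11 (m ω ℏ kx kp ηx ηp : ℝ)
    (hm : 0 < m) (hω : 0 < ω) (hℏ : 0 < ℏ) (hkx : 0 < kx) (hkp : 0 < kp)
    (hηx : 0 < ηx) (hηx1 : ηx ≤ 1) (hηp : 0 < ηp) (hηp1 : ηp ≤ 1)
    (S D : ℝ → Matrix (Fin 2) (Fin 2) ℝ)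
    (hsym : ∀ t, (S t)ᵀ = S t)
    (hderiv : ∀ t i j, HasDerivAt (fun s => S s i j) (D t i j) t)
    (hode : ∀ t, D t =
      S t * !![0, -m * ω ^ 2; 1 / m, 0] + (!![0, -m * ω ^ 2; 1 / m, 0])ᵀ * S t
        - S t * !![Real.sqrt (ηx * kx), 0; 0, Real.sqrt (ηp * kp)] *
            (!![Real.sqrt (ηx * kx), 0; 0, Real.sqrt (ηp * kp)])ᵀ * S t
        + (ℏ ^ 2 / 4) • !![kp, 0; 0, kx]) :
    ∀ t : ℝ,
      let B : Matrix (Fin 2) (Fin 2) ℝ := !![Real.sqrt (ηx * kx), 0; 0, Real.sqrt (ηp * kp)]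
      let χ : Matrix (Fin 2) (Fin 2) ℝ := !![1 / ηx, 0; 0, 1 / ηp]
      (B * S t * B).trace ≠ 0 →
      HasDerivAt (fun s => (S s).det)
        ((B * S t * B).trace *
          (ℏ ^ 2 / 4 * ((χ * (B * S t * B)).trace / (B * S t * B).trace) - (S t).det)) t :=
  stmt_11_general m ω ℏ kx kp ηx ηp hkx hkp hηx hηp S D hderiv hode
end

section
/- With A = [[0,−mω²],[1/m,0]], B = diag(√(η_x k_x), √(η_p k_p)), Q = (ℏ²/4)diag(k_p, k_x), χ = diag(1/η_x, 1/η_p), let Σ_∞ = [[v_x, c],[c, v_p]] be a positive-definite solution of the algebraic Riccati equation. Then det Σ_∞ = (ℏ²/4)·(k_x v_x + k_p v_p)/(η_x k_x v_x + η_p k_p v_p). -/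
/-!
Multiplying the Riccati equation `SA + AᵀS - SDS + Q = 0` on the right by `adj S` and taking
traces, the terms `tr (S A adj S)` and `tr (Aᵀ S adj S)` are `det S · tr A`, which vanishes
because the oscillator drift `A` is traceless, while `S D S adj S = det S · S D`.  This leaves
`det S · tr (D S) = tr (Q adj S)`; for the 2 × 2 data of the theorem `tr (B Bᵀ S)` is the
denominator and `tr (Q adj S)` is `ℏ²/4` times the numerator.
-/

open Matrix

namespace Matrix

variable {n R : Type*} [Fintype n] [DecidableEq n] [CommRing R]

theorem det_mul_trace_mul_eq_trace_mul_adjugate_of_riccati {S A D Q : Matrix n n R}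
    (hA : A.trace = 0) (h : S * A + Aᵀ * S - S * D * S + Q = 0) :
    S.det * (D * S).trace = (Q * S.adjugate).trace := by
  have hS : S * S.adjugate = S.det • (1 : Matrix n n R) := mul_adjugate S
  have htr := congrArg (fun M => (M * S.adjugate).trace) h
  simp only [add_mul, sub_mul, trace_add, trace_sub, zero_mul, trace_zero] at htr
  have hSA : (S * A * S.adjugate).trace = S.det * A.trace := by
    rw [trace_mul_comm, ← Matrix.mul_assoc, adjugate_mul, Matrix.smul_mul, Matrix.one_mul,
      trace_smul, smul_eq_mul]
  have hAS : (Aᵀ * S * S.adjugate).trace = S.det * A.trace := by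
    rw [Matrix.mul_assoc, hS, Matrix.mul_smul, Matrix.mul_one, trace_smul, smul_eq_mul,
      trace_transpose]
  have hSDS : (S * D * S * S.adjugate).trace = S.det * (D * S).trace := by
    rw [Matrix.mul_assoc, hS, Matrix.mul_smul, Matrix.mul_one, trace_smul, smul_eq_mul,
      trace_mul_comm]
  rw [hSA, hAS, hSDS, hA] at htr
  linear_combination -htr

theorem sqrt_fin_two_mul_transpose_self {a b : ℝ} (ha : 0 ≤ a) (hb : 0 ≤ b) :
    !![√a, 0; 0, √b] * !![√a, 0; 0, √b]ᵀ = !![a, 0; 0, b] := by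
  ext i j
  fin_cases i <;> fin_cases j <;> simp [mul_apply, Real.mul_self_sqrt, ha, hb]

end Matrix

theorem stmt_12_general (m ω ℏ kx kp ηx ηp vx vp c : ℝ)
    (hkx : 0 < kx) (hkp : 0 < kp)
    (hηx : 0 < ηx) (hηp : 0 < ηp)
    (hPD : (!![vx, c; c, vp] : Matrix (Fin 2) (Fin 2) ℝ).PosDef)
    (hARE :
      let Sinf : Matrix (Fin 2) (Fin 2) ℝ := !![vx, c; c, vp]
      let A : Matrix (Fin 2) (Fin 2) ℝ := !![0, -m * ω ^ 2; 1 / m, 0]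
      let B : Matrix (Fin 2) (Fin 2) ℝ := !![Real.sqrt (ηx * kx), 0; 0, Real.sqrt (ηp * kp)]
      Sinf * A + Aᵀ * Sinf - Sinf * B * Bᵀ * Sinf + (ℏ ^ 2 / 4) • !![kp, 0; 0, kx] = 0) :
    (!![vx, c; c, vp] : Matrix (Fin 2) (Fin 2) ℝ).det =
      ℏ ^ 2 / 4 * ((kx * vx + kp * vp) / (ηx * kx * vx + ηp * kp * vp)) := by
  dsimp only at hARE
  rw [Matrix.mul_assoc _ _ (Matrix.transpose _),
    sqrt_fin_two_mul_transpose_self (by positivity) (by positivity)] at hARE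
  have hdet_trace := det_mul_trace_mul_eq_trace_mul_adjugate_of_riccati (by simp [trace_fin_two_of]) hARE
  have hvx : 0 < vx := hPD.diag_pos (i := 0)
  have hvp : 0 < vp := hPD.diag_pos (i := 1)
  have hden : 0 < ηx * kx * vx + ηp * kp * vp := by positivity
  rw [adjugate_fin_two_of, Matrix.smul_mul, trace_smul, mul_fin_two, mul_fin_two,
    trace_fin_two_of, trace_fin_two_of, smul_eq_mul] at hdet_trace
  rw [mul_div_assoc', eq_div_iff hden.ne']
  linear_combination hdet_trace

theorem stmt_12 (m ω ℏ kx kp ηx ηp vx vp c : ℝ)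
    (hm : 0 < m) (hω : 0 < ω) (hℏ : 0 < ℏ) (hkx : 0 < kx) (hkp : 0 < kp)
    (hηx : 0 < ηx) (hηx1 : ηx ≤ 1) (hηp : 0 < ηp) (hηp1 : ηp ≤ 1)
    (hPD : (!![vx, c; c, vp] : Matrix (Fin 2) (Fin 2) ℝ).PosDef)
    (hARE :
      let Sinf : Matrix (Fin 2) (Fin 2) ℝ := !![vx, c; c, vp]
      let A : Matrix (Fin 2) (Fin 2) ℝ := !![0, -m * ω ^ 2; 1 / m, 0]
      let B : Matrix (Fin 2) (Fin 2) ℝ := !![Real.sqrt (ηx * kx), 0; 0, Real.sqrt (ηp * kp)]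
      Sinf * A + Aᵀ * Sinf - Sinf * B * Bᵀ * Sinf + (ℏ ^ 2 / 4) • !![kp, 0; 0, kx] = 0) :
    (!![vx, c; c, vp] : Matrix (Fin 2) (Fin 2) ℝ).det =
      ℏ ^ 2 / 4 * ((kx * vx + kp * vp) / (ηx * kx * vx + ηp * kp * vp)) :=
  stmt_12_general m ω ℏ kx kp ηx ηp vx vp c hkx hkp hηx hηp hPD hARE
end

section
/- Let m, ω > 0, η_x, η_p ∈ (0,1], k_x, k_p > 0 and define α, β, γ, δ as: α = −mω²√(η_p k_p/(η_x k_x)), β = (1/m)√(η_x k_x/(η_p k_p)), γ = √((ℏ²/4)k_p k_x η_x + β²), δ = √((ℏ²/4)k_x k_p η_p + α²). Then αγ + βδ = 0 if and only if k_x/k_p = m²ω²√(η_p/η_x). -/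
lemma sq_inj_aux {x y : ℝ} (hx : 0 ≤ x) (hy : 0 ≤ y) (h : x ^ 2 = y ^ 2) : x = y := by
  nlinarith [sq_nonneg (x - y), sq_nonneg (x + y)]

theorem stmt_16 (m ω ℏ kx kp ηx ηp : ℝ)
    (hm : 0 < m) (hω : 0 < ω) (hℏ : 0 < ℏ) (hkx : 0 < kx) (hkp : 0 < kp)
    (hηx : 0 < ηx) (hηx1 : ηx ≤ 1) (hηp : 0 < ηp) (hηp1 : ηp ≤ 1) :
    let α := -m * ω ^ 2 * Real.sqrt (ηp * kp / (ηx * kx))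
    let β := (1 / m) * Real.sqrt (ηx * kx / (ηp * kp))
    let γ := Real.sqrt (ℏ ^ 2 / 4 * kp * kx * ηx + β ^ 2)
    let δ := Real.sqrt (ℏ ^ 2 / 4 * kx * kp * ηp + α ^ 2)
    α * γ + β * δ = 0 ↔ kx / kp = m ^ 2 * ω ^ 2 * Real.sqrt (ηp / ηx) := by
  intro α β γ δ
  have hs1 : 0 < Real.sqrt (ηp * kp / (ηx * kx)) :=
    Real.sqrt_pos.mpr (by positivity)
  have hs2 : 0 < Real.sqrt (ηx * kx / (ηp * kp)) :=
    Real.sqrt_pos.mpr (by positivity)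
  have hs1sq : (Real.sqrt (ηp * kp / (ηx * kx))) ^ 2 = ηp * kp / (ηx * kx) :=
    Real.sq_sqrt (by positivity)
  have hs2sq : (Real.sqrt (ηx * kx / (ηp * kp))) ^ 2 = ηx * kx / (ηp * kp) :=
    Real.sq_sqrt (by positivity)
  have hαneg : α < 0 := by
    have : 0 < m * ω ^ 2 * Real.sqrt (ηp * kp / (ηx * kx)) := by positivity
    simp only [α]; nlinarith
  have hβpos : 0 < β := by
    simp only [β]; positivity
  have hα2 : α ^ 2 * (ηx * kx) = m ^ 2 * ω ^ 4 * (ηp * kp) := by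
    show ((-m * ω ^ 2) * Real.sqrt (ηp * kp / (ηx * kx))) ^ 2 * (ηx * kx) = _
    rw [mul_pow, hs1sq]
    field_simp
  have hβ2 : β ^ 2 * (m ^ 2 * (ηp * kp)) = ηx * kx := by
    show ((1 / m) * Real.sqrt (ηx * kx / (ηp * kp))) ^ 2 * _ = _
    rw [mul_pow, hs2sq]
    field_simp
  have hγpos : 0 < γ := Real.sqrt_pos.mpr (by positivity)
  have hδpos : 0 < δ := Real.sqrt_pos.mpr (by positivity)
  have hγ2 : γ ^ 2 = ℏ ^ 2 / 4 * kp * kx * ηx + β ^ 2 :=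
    Real.sq_sqrt (by positivity)
  have hδ2 : δ ^ 2 = ℏ ^ 2 / 4 * kx * kp * ηp + α ^ 2 :=
    Real.sq_sqrt (by positivity)
  have ht : 0 < Real.sqrt (ηp / ηx) := Real.sqrt_pos.mpr (by positivity)
  have htsq : (Real.sqrt (ηp / ηx)) ^ 2 = ηp / ηx := Real.sq_sqrt (by positivity)
  set t := Real.sqrt (ηp / ηx)
  have ht2 : t ^ 2 * ηx = ηp := by rw [htsq]; field_simp
  clear_value t
  clear_value δ
  clear_value γ
  clear_value β
  clear_value α
  -- Step 1: α*γ + β*δ = 0  ↔  α² ηx = β² ηp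
  have hkey : α * γ + β * δ = 0 ↔ α ^ 2 * ηx = β ^ 2 * ηp := by
    constructor
    · intro h
      have hαγ : α * γ = -(β * δ) := by linarith
      have hsq : α ^ 2 * γ ^ 2 = β ^ 2 * δ ^ 2 := by
        calc α ^ 2 * γ ^ 2 = (α * γ) ^ 2 := by ring
        _ = (-(β * δ)) ^ 2 := by rw [hαγ]
        _ = β ^ 2 * δ ^ 2 := by ring
      rw [hγ2, hδ2] at hsq
      have hc : (0 : ℝ) < ℏ ^ 2 / 4 * kx * kp := by positivity
      have h3 : (ℏ ^ 2 / 4 * kx * kp) * (α ^ 2 * ηx)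
          = (ℏ ^ 2 / 4 * kx * kp) * (β ^ 2 * ηp) := by linear_combination hsq
      exact mul_left_cancel₀ (ne_of_gt hc) h3
    · intro h
      have hsq : (β * δ) ^ 2 = (-α * γ) ^ 2 := by
        have h4 : α ^ 2 * γ ^ 2 = β ^ 2 * δ ^ 2 := by
          rw [hγ2, hδ2]
          linear_combination (ℏ ^ 2 / 4 * kx * kp) * h
        linear_combination -h4
      have hβδ : 0 ≤ β * δ := by positivity
      have hαγ : 0 ≤ -α * γ := mul_nonneg (by linarith) hγpos.le
      have := sq_inj_aux hβδ hαγ hsq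
      linarith
  rw [hkey]
  -- Step 2: α² ηx = β² ηp  ↔  ηx kx² = m⁴ ω⁴ ηp kp²
  have hstep2 : α ^ 2 * ηx = β ^ 2 * ηp ↔ ηx * kx ^ 2 = m ^ 4 * ω ^ 4 * (ηp * kp ^ 2) := by
    constructor
    · intro h
      linear_combination (-kx) * hβ2 - m ^ 2 * kp * kx * h + m ^ 2 * kp * hα2
    · intro h
      have h' : (m ^ 2 * kp * kx) * (α ^ 2 * ηx) = (m ^ 2 * kp * kx) * (β ^ 2 * ηp) := by
        linear_combination m ^ 2 * kp * hα2 - kx * hβ2 - h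
      exact mul_left_cancel₀ (by positivity) h'
  rw [hstep2]
  -- Step 3: ηx kx² = m⁴ ω⁴ ηp kp²  ↔  kx / kp = m² ω² t
  constructor
  · intro h
    have hsq : kx ^ 2 = (m ^ 2 * ω ^ 2 * t * kp) ^ 2 := by
      have h' : ηx * kx ^ 2 = ηx * (m ^ 2 * ω ^ 2 * t * kp) ^ 2 := by
        linear_combination h - m ^ 4 * ω ^ 4 * kp ^ 2 * ht2
      exact mul_left_cancel₀ (ne_of_gt hηx) h'
    have := sq_inj_aux hkx.le (by positivity) hsq
    rw [div_eq_iff (ne_of_gt hkp)]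
    linarith
  · intro h
    rw [div_eq_iff (ne_of_gt hkp)] at h
    have hsq : kx ^ 2 = (m ^ 2 * ω ^ 2 * t) ^ 2 * kp ^ 2 := by
      rw [h]; ring
    linear_combination hsq * ηx + m ^ 4 * ω ^ 4 * kp ^ 2 * ht2
end

section
/- Under the zero-correlation condition k_x/k_p = m²ω²√(η_p/η_x), the matrix Σ = (ℏ/(2(η_xη_p)^{1/4}))·diag(1/(mω), mω) solves the algebraic Riccati equation ΣA + AᵀΣ − ΣBBᵀΣ + Q = 0 with A = [[0,−mω²],[1/m,0]], B = diag(√(η_x k_x), √(η_p k_p)), Q = (ℏ²/4)diag(k_p, k_x). -/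
/-!
For a diagonal `Σ = diag(σx, σp)` and an off-diagonal drift `A`, the Riccati residual is diagonal
in its quadratic part and off-diagonal in its linear part, so it vanishes iff
`a σx + b σp = 0` (which holds for any `Σ ∝ diag(1/(mω), mω)`) and `βx² σx² = qx`, `βp² σp² = qp`.
With `Σ = (ℏ / 2s) diag(1/(mω), mω)` and `s² = √(ηx ηp)`, the two diagonal equations become
`ηx kx = √(ηx ηp) m²ω² kp` and `ηp kp m²ω² = √(ηx ηp) kx`, both equivalent to the zero-correlation
condition.
-/

open Matrix

theorem riccati_residual_eq_zero_of_diagonal {R : Type*} [CommRing R]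
    (a b σx σp βx βp qx qp : R) (h_off : a * σx + b * σp = 0)
    (hx : βx ^ 2 * σx ^ 2 = qx) (hp : βp ^ 2 * σp ^ 2 = qp) :
    !![σx, 0; 0, σp] * !![0, a; b, 0] + !![0, a; b, 0]ᵀ * !![σx, 0; 0, σp]
      - !![σx, 0; 0, σp] * !![βx, 0; 0, βp] * !![βx, 0; 0, βp]ᵀ * !![σx, 0; 0, σp]
      + !![qx, 0; 0, qp] = 0 := by
  ext i j
  fin_cases i <;> fin_cases j <;> simp [-cons_mul, mul_apply, Fin.sum_univ_two]
  · linear_combination -hx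
  · linear_combination h_off
  · linear_combination h_off
  · linear_combination -hp

theorem smul_diagonal_fin_two {R : Type*} [Semiring R] (c u v : R) :
    c • !![u, 0; 0, v] = !![c * u, 0; 0, c * v] := by
  simp [smul_of]

theorem Real.rpow_one_div_four_sq {x : ℝ} (hx : 0 ≤ x) : (x ^ ((1 : ℝ) / 4)) ^ 2 = √x := by
  rw [← Real.rpow_natCast, ← Real.rpow_mul hx, Real.sqrt_eq_rpow]
  norm_num

section ZeroCorrelation

variable {m ω kx kp ηx ηp : ℝ}

theorem sqrt_mul_eq_of_zero_correlation (hηx : 0 < ηx)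
    (hZC : kx = m ^ 2 * ω ^ 2 * √(ηp / ηx) * kp) :
    √ηx * kx = m ^ 2 * ω ^ 2 * √ηp * kp := by
  rw [hZC, Real.sqrt_div' _ hηx.le]
  field_simp

theorem mul_eq_sqrt_mul_of_zero_correlation_x (hηx : 0 < ηx)
    (hZC : kx = m ^ 2 * ω ^ 2 * √(ηp / ηx) * kp) :
    ηx * kx = √(ηx * ηp) * (m ^ 2 * ω ^ 2 * kp) := by
  rw [Real.sqrt_mul hηx.le]
  linear_combination -kx * Real.mul_self_sqrt hηx.le
    + √ηx * sqrt_mul_eq_of_zero_correlation hηx hZC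

theorem mul_eq_sqrt_mul_of_zero_correlation_p (hηx : 0 < ηx) (hηp : 0 ≤ ηp)
    (hZC : kx = m ^ 2 * ω ^ 2 * √(ηp / ηx) * kp) :
    ηp * kp * (m ^ 2 * ω ^ 2) = √(ηx * ηp) * kx := by
  rw [Real.sqrt_mul hηx.le]
  linear_combination -m ^ 2 * ω ^ 2 * kp * Real.mul_self_sqrt hηp
    - √ηp * sqrt_mul_eq_of_zero_correlation hηx hZC

end ZeroCorrelation

theorem stmt_17_general (m ω ℏ kx kp ηx ηp : ℝ)
    (hm : 0 < m) (hω : 0 < ω) (hkp : 0 < kp)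
    (hηx : 0 < ηx) (hηp : 0 < ηp)
    (hZC : kx = m ^ 2 * ω ^ 2 * Real.sqrt (ηp / ηx) * kp) :
    let Sig : Matrix (Fin 2) (Fin 2) ℝ :=
      (ℏ / (2 * (ηx * ηp) ^ ((1 : ℝ) / 4))) • !![1 / (m * ω), 0; 0, m * ω]
    let A : Matrix (Fin 2) (Fin 2) ℝ := !![0, -m * ω ^ 2; 1 / m, 0]
    let B : Matrix (Fin 2) (Fin 2) ℝ := !![Real.sqrt (ηx * kx), 0; 0, Real.sqrt (ηp * kp)]
    Sig * A + Aᵀ * Sig - Sig * B * Bᵀ * Sig + (ℏ ^ 2 / 4) • !![kp, 0; 0, kx] = 0 := by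
  intro Sig A B
  have hkx : 0 ≤ kx := by rw [hZC]; positivity
  have hs_sq : ((ηx * ηp) ^ ((1 : ℝ) / 4)) ^ 2 = √(ηx * ηp) :=
    Real.rpow_one_div_four_sq (by positivity)
  have hx := mul_eq_sqrt_mul_of_zero_correlation_x hηx hZC
  have hp := mul_eq_sqrt_mul_of_zero_correlation_p hηx hηp.le hZC
  simp only [Sig, B, smul_diagonal_fin_two]
  apply riccati_residual_eq_zero_of_diagonal
  · field_simp
    ring
  · rw [Real.sq_sqrt (by positivity), hx, ← hs_sq]
    field_simp
    ring
  · rw [Real.sq_sqrt (by positivity), eq_div_of_mul_eq (by positivity) hp, ← hs_sq]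
    field_simp
    ring

theorem stmt_17 (m ω ℏ kx kp ηx ηp : ℝ)
    (hm : 0 < m) (hω : 0 < ω) (hℏ : 0 < ℏ) (hkx : 0 < kx) (hkp : 0 < kp)
    (hηx : 0 < ηx) (hηx1 : ηx ≤ 1) (hηp : 0 < ηp) (hηp1 : ηp ≤ 1)
    (hZC : kx = m ^ 2 * ω ^ 2 * Real.sqrt (ηp / ηx) * kp) :
    let Sig : Matrix (Fin 2) (Fin 2) ℝ :=
      (ℏ / (2 * (ηx * ηp) ^ ((1 : ℝ) / 4))) • !![1 / (m * ω), 0; 0, m * ω]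
    let A : Matrix (Fin 2) (Fin 2) ℝ := !![0, -m * ω ^ 2; 1 / m, 0]
    let B : Matrix (Fin 2) (Fin 2) ℝ := !![Real.sqrt (ηx * kx), 0; 0, Real.sqrt (ηp * kp)]
    Sig * A + Aᵀ * Sig - Sig * B * Bᵀ * Sig + (ℏ ^ 2 / 4) • !![kp, 0; 0, kx] = 0 :=
  stmt_17_general m ω ℏ kx kp ηx ηp hm hω hkp hηx hηp hZC
end
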